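/- There do not exist a positive-edge-weighted tree T with four distinguished leaves a, b, c, d and reals 0 ≤ d_min ≤ d_max such that: d_min ≤ d_T(a,b) ≤ d_max, d_min ≤ d_T(b,c) ≤ d_max, d_min ≤ d_T(b,d) ≤ d_max, d_T(a,d) < d_min, d_T(c,d) < d_min, and d_T(a,c) > d_max. (Forbidden coloring f-c(K_{1,3}): the star with center b, non-edges (a,d) and (c,d) red and non-edge (a,c) blue, is not realizable.) -/

import Mathlib

open SimpleGraph

/-- A tree with positive real edge weights. -/
structure WTree (α : Type) where
  g : SimpleGraph α
  isTree : g.IsTree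
  w : α → α → ℝ
  w_symm : ∀ a b, w a b = w b a
  w_pos : ∀ a b, g.Adj a b → 0 < w a b

/-- The weighted distance between two vertices of a weighted tree: the sum of
the weights of the edges on the unique path between them. -/
noncomputable def WTree.dist {α : Type} (T : WTree α) (u v : α) : ℝ :=
  (((T.isTree.existsUnique_path u v).exists.choose).darts.map
    (fun d => T.w d.toProd.1 d.toProd.2)).sum

/-- A vertex of a weighted tree is a leaf if it has exactly one neighbor. -/
def WTree.IsLeaf {α : Type} (T : WTree α) (v : α) : Prop :=
  ∃! u, T.g.Adj v u

/-- `G = PCG(T, dmin, dmax)` via the leaf-assignment `f`. -/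
def IsPCGWith {V β : Type} (G : SimpleGraph V) (T : WTree β) (f : V → β)
    (dmin dmax : ℝ) : Prop :=
  Function.Injective f ∧ (∀ v, T.IsLeaf (f v)) ∧ (∀ b, T.IsLeaf b → ∃ v, f v = b) ∧
    ∀ u v : V, u ≠ v →
      (G.Adj u v ↔ dmin ≤ T.dist (f u) (f v) ∧ T.dist (f u) (f v) ≤ dmax)

/-- A graph is a pairwise compatibility graph. -/
def IsPCG {V : Type} (G : SimpleGraph V) : Prop :=
  ∃ (β : Type) (T : WTree β) (f : V → β) (dmin dmax : ℝ),
    0 ≤ dmin ∧ dmin ≤ dmax ∧ IsPCGWith G T f dmin dmax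

/-! Tree distances satisfy the four-point condition
`d(a,c) + d(b,d) ≤ max (d(a,b) + d(c,d)) (d(a,d) + d(b,c))`: the medians of `a, c, d` and of
`a, c, b` both lie on the path from `a` to `c`, and comparing their positions on it bounds
`d(a,c) + d(b,d)` by one of the two sums. Under the prescribed colouring the left side exceeds
`d_max + d_min`, whereas each sum on the right is below it. -/

namespace SimpleGraph.IsAcyclic

variable {V : Type*} {G : SimpleGraph V} {x c d : V} {p : G.Walk x c} {q : G.Walk x d}

theorem eq_of_mem_support_of_snd_ne (hG : G.IsAcyclic) (hp : p.IsPath) (hq : q.IsPath)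
    (hsnd : p.snd ≠ q.snd) {v : V} (hvp : v ∈ p.support) (hvq : v ∈ q.support) : v = x := by
  classical
  by_contra hvx
  have hpq : p.takeUntil v hvp = q.takeUntil v hvq := congrArg Subtype.val <|
    (hG.subsingleton_path x v).elim ⟨_, hp.takeUntil hvp⟩ ⟨_, hq.takeUntil hvq⟩
  exact hsnd (by rw [← Walk.snd_takeUntil hvx p hvp, hpq, Walk.snd_takeUntil hvx q hvq])

theorem isPath_reverse_append_of_snd_ne (hG : G.IsAcyclic) (hp : p.IsPath) (hq : q.IsPath)
    (hsnd : p.snd ≠ q.snd) : (p.reverse.append q).IsPath := by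
  rw [hG.isPath_iff_isTrail, Walk.isTrail_append, Walk.edges_reverse, List.disjoint_reverse_left]
  refine ⟨hp.reverse.isTrail, hq.isTrail, ?_⟩
  rintro ⟨u, w⟩ hep heq
  have hu := hG.eq_of_mem_support_of_snd_ne hp hq hsnd
    (p.fst_mem_support_of_mem_edges hep) (q.fst_mem_support_of_mem_edges heq)
  have hw := hG.eq_of_mem_support_of_snd_ne hp hq hsnd
    (p.snd_mem_support_of_mem_edges hep) (q.snd_mem_support_of_mem_edges heq)
  exact (p.adj_of_mem_edges hep).ne (hu.trans hw.symm)

end SimpleGraph.IsAcyclic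

namespace WTree

variable {α : Type} (T : WTree α)

noncomputable def weight {u v : α} (p : T.g.Walk u v) : ℝ :=
  (p.darts.map fun d => T.w d.toProd.1 d.toProd.2).sum

@[simp] theorem weight_nil {u : α} : T.weight (Walk.nil : T.g.Walk u u) = 0 := rfl

theorem weight_append {u v x : α} (p : T.g.Walk u v) (q : T.g.Walk v x) :
    T.weight (p.append q) = T.weight p + T.weight q := by
  simp [weight, Walk.darts_append]

theorem weight_reverse {u v : α} (p : T.g.Walk u v) : T.weight p.reverse = T.weight p := by
  simp [weight, Walk.darts_reverse, List.sum_reverse, Function.comp_def, T.w_symm]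

theorem weight_nonneg {u v : α} (p : T.g.Walk u v) : 0 ≤ T.weight p :=
  List.sum_nonneg <| by
    simpa using fun d _ => (T.w_pos _ _ d.adj).le

theorem dist_eq_weight {u v : α} {p : T.g.Walk u v} (hp : p.IsPath) :
    T.dist u v = T.weight p := by
  rw [WTree.dist, (T.isTree.existsUnique_path u v).unique
    (T.isTree.existsUnique_path u v).exists.choose_spec hp, weight]

@[simp] theorem dist_self (u : α) : T.dist u u = 0 := by
  rw [T.dist_eq_weight Walk.IsPath.nil, weight_nil]

theorem dist_comm (u v : α) : T.dist u v = T.dist v u := by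
  obtain ⟨p, hp⟩ := (T.isTree.existsUnique_path u v).exists
  rw [T.dist_eq_weight hp, T.dist_eq_weight hp.reverse, weight_reverse]

theorem dist_nonneg (u v : α) : 0 ≤ T.dist u v := by
  obtain ⟨p, hp⟩ := (T.isTree.existsUnique_path u v).exists
  exact T.dist_eq_weight hp ▸ T.weight_nonneg p

theorem dist_eq_add_of_mem_support {u v m : α} {p : T.g.Walk u v} (hp : p.IsPath)
    (hm : m ∈ p.support) : T.dist u v = T.dist u m + T.dist m v := by
  obtain ⟨q, r, hq, hr, rfl⟩ := hp.mem_support_iff_exists_append.mp hm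
  rw [T.dist_eq_weight hp, weight_append, T.dist_eq_weight hq, T.dist_eq_weight hr]

theorem dist_eq_add_or_dist_eq_add {u v m₁ m₂ : α} {p : T.g.Walk u v} (hp : p.IsPath)
    (h₁ : m₁ ∈ p.support) (h₂ : m₂ ∈ p.support) :
    T.dist u m₁ = T.dist u m₂ + T.dist m₂ m₁ ∨ T.dist m₁ v = T.dist m₁ m₂ + T.dist m₂ v := by
  obtain ⟨q, r, hq, hr, rfl⟩ := hp.mem_support_iff_exists_append.mp h₁
  exact ((Walk.mem_support_append_iff q r).mp h₂).imp
    (T.dist_eq_add_of_mem_support hq) (T.dist_eq_add_of_mem_support hr)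

theorem exists_median {x c : α} {p : T.g.Walk x c} (hp : p.IsPath) (d : α) :
    ∃ m ∈ p.support, T.dist x d = T.dist x m + T.dist m d ∧
      T.dist c d = T.dist c m + T.dist m d := by
  induction p generalizing d with
  | nil => exact ⟨_, Walk.start_mem_support _, by simp, by simp⟩
  | @cons x y c h p' ih =>
    obtain ⟨q, hq⟩ := (T.isTree.existsUnique_path x d).exists
    cases q with
    | nil => exact ⟨x, Walk.start_mem_support _, by simp, by simp⟩
    | @cons _ z _ h' q' =>
      by_cases hyz : y = z
      · subst hyz
        obtain ⟨m, hm, hyd, hcd⟩ := ih hp.of_cons d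
        have hm' : m ∈ (Walk.cons h p').support := List.mem_cons_of_mem _ hm
        have hxc := T.dist_eq_add_of_mem_support hp (by simp : y ∈ (Walk.cons h p').support)
        have hxd := T.dist_eq_add_of_mem_support hq (by simp : y ∈ (Walk.cons h q').support)
        have hxc' := T.dist_eq_add_of_mem_support hp hm'
        have hyc := T.dist_eq_add_of_mem_support hp.of_cons hm
        exact ⟨m, hm', by linarith, hcd⟩
      · -- the paths to `c` and `d` leave `x` along different edges, so they join up
        refine ⟨x, Walk.start_mem_support _, by simp, ?_⟩
        have hpq :=
          T.isTree.isAcyclic.isPath_reverse_append_of_snd_ne hp hq (by simpa using hyz)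
        rw [T.dist_eq_weight hpq, weight_append, weight_reverse, ← T.dist_eq_weight hp,
          ← T.dist_eq_weight hq, T.dist_comm x c]

theorem dist_triangle (u v x : α) : T.dist u x ≤ T.dist u v + T.dist v x := by
  obtain ⟨p, hp⟩ := (T.isTree.existsUnique_path v u).exists
  obtain ⟨m, hm, hvx, hux⟩ := T.exists_median hp x
  have hvu := T.dist_eq_add_of_mem_support hp hm
  linarith [T.dist_nonneg v m, T.dist_comm u v, T.dist_comm u m]

theorem dist_add_dist_le_max (a b c d : α) :
    T.dist a c + T.dist b d ≤ max (T.dist a b + T.dist c d) (T.dist a d + T.dist b c) := by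
  obtain ⟨p, hp⟩ := (T.isTree.existsUnique_path a c).exists
  obtain ⟨m₁, hm₁, had, hcd⟩ := T.exists_median hp d
  obtain ⟨m₂, hm₂, hab, hcb⟩ := T.exists_median hp b
  have hac₁ := T.dist_eq_add_of_mem_support hp hm₁
  have hac₂ := T.dist_eq_add_of_mem_support hp hm₂
  have hbd : T.dist b d ≤ T.dist b m₂ + T.dist m₂ m₁ + T.dist m₁ d := by
    linarith [T.dist_triangle b m₂ d, T.dist_triangle m₂ m₁ d]
  -- the order of `m₁` and `m₂` along the path from `a` to `c` decides which sum dominates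
  rcases T.dist_eq_add_or_dist_eq_add hp hm₁ hm₂ with h | h
  · exact le_max_of_le_right (by
      linarith [T.dist_comm b c, T.dist_comm c m₁, T.dist_comm c m₂, T.dist_comm b m₂])
  · exact le_max_of_le_left (by
      linarith [T.dist_comm c m₁, T.dist_comm c m₂, T.dist_comm b m₂, T.dist_comm m₁ m₂])

end WTree

theorem forbidden_K13 : ¬ ∃ (β : Type) (T : WTree β) (a b c d : β) (dmin dmax : ℝ),
    T.IsLeaf a ∧ T.IsLeaf b ∧ T.IsLeaf c ∧ T.IsLeaf d ∧
    a ≠ b ∧ a ≠ c ∧ a ≠ d ∧ b ≠ c ∧ b ≠ d ∧ c ≠ d ∧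
    0 ≤ dmin ∧ dmin ≤ dmax ∧
    dmin ≤ T.dist a b ∧ T.dist a b ≤ dmax ∧
    dmin ≤ T.dist b c ∧ T.dist b c ≤ dmax ∧
    dmin ≤ T.dist b d ∧ T.dist b d ≤ dmax ∧
    T.dist a d < dmin ∧ T.dist c d < dmin ∧
    dmax < T.dist a c := by
  rintro ⟨β, T, a, b, c, d, dmin, dmax, -, -, -, -, -, -, -, -, -, -, -, -,
    -, hab, -, hbc, hbd, -, had, hcd, hac⟩
  rcases le_max_iff.mp (T.dist_add_dist_le_max a b c d) with h | h <;> linarith
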